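/- arXiv:2410.14440 — 2 statements merged into one kernel-verified Lean document; each statement's English description precedes it below -/
import Mathlib

section
/- Let F be a Set-functor, let r : X ⇸ Y be a relation, and let r₁, …, rₙ be a composable sequence of relations from X to Y with rₙ ⋅ … ⋅ r₁ ≤ r. Then there exists a composable sequence r₁', …, rₙ' (of the same length n) with rₙ' ⋅ … ⋅ r₁' = r and F̄rₙ ⋅ … ⋅ F̄r₁ ≤ F̄rₙ' ⋅ … ⋅ F̄r₁', where F̄ denotes the Barr lifting of F. -/
open CategoryTheory

universe u

/-- A relation from `X` to `Y`. -/
abbrev Rel' (X Y : Type u) : Type u := X → Y → Prop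

/-- Composite `s ⋅ r` of `r : X ⇸ Y` and `s : Y ⇸ Z`. -/
def relComp {X Y Z : Type u} (s : Rel' Y Z) (r : Rel' X Y) : Rel' X Z :=
  fun x z => ∃ y, r x y ∧ s y z

/-- Converse relation `r°`. -/
def relConv {X Y : Type u} (r : Rel' X Y) : Rel' Y X := fun y x => r x y

/-- Identity relation `1_X`. -/
def relId (X : Type u) : Rel' X X := fun x y => x = y

/-- The graph relation of a function. -/
def graphRel {X Y : Type u} (f : X → Y) : Rel' X Y := fun x y => f x = y

/-- Pointwise order `r ≤ r'` on relations. -/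
def relLe {X Y : Type u} (r r' : Rel' X Y) : Prop := ∀ x y, r x y → r' x y

/-- A relation is total if every `x` is related to some `y`. -/
def relTotal {X Y : Type u} (r : Rel' X Y) : Prop := ∀ x, ∃ y, r x y

/-- A relation is surjective if every `y` is related to some `x`. -/
def relSurj {X Y : Type u} (r : Rel' X Y) : Prop := ∀ y, ∃ x, r x y

/-- A lax extension of a `Set`-functor `F`. -/
structure LaxExt (F : Type u ⥤ Type u) : Type (u + 1) where
  ext : ∀ {X Y : Type u}, Rel' X Y → Rel' (F.obj X) (F.obj Y)
  mono : ∀ {X Y : Type u} (r r' : Rel' X Y), relLe r r' → relLe (ext r) (ext r')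
  lcomp : ∀ {X Y Z : Type u} (r : Rel' X Y) (s : Rel' Y Z),
    relLe (relComp (ext s) (ext r)) (ext (relComp s r))
  mapLe : ∀ {X Y : Type u} (f : X → Y), relLe (graphRel (F.map (TypeCat.ofHom f))) (ext (graphRel f))
  mapConvLe : ∀ {X Y : Type u} (f : X → Y),
    relLe (relConv (graphRel (F.map (TypeCat.ofHom f)))) (ext (relConv (graphRel f)))

/-- A relax extension of a `Set`-functor `F` (a lax extension without (L2)). -/
structure RelaxExt (F : Type u ⥤ Type u) : Type (u + 1) where
  ext : ∀ {X Y : Type u}, Rel' X Y → Rel' (F.obj X) (F.obj Y)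
  mono : ∀ {X Y : Type u} (r r' : Rel' X Y), relLe r r' → relLe (ext r) (ext r')
  mapLe : ∀ {X Y : Type u} (f : X → Y), relLe (graphRel (F.map (TypeCat.ofHom f))) (ext (graphRel f))
  mapConvLe : ∀ {X Y : Type u} (f : X → Y),
    relLe (relConv (graphRel (F.map (TypeCat.ofHom f)))) (ext (relConv (graphRel f)))

/-- Normality (identity-preservation) of a lax extension. -/
def LaxExt.IsNormal {F : Type u ⥤ Type u} (L : LaxExt F) : Prop :=
  ∀ X : Type u, L.ext (relId X) = relId (F.obj X)

/-- The Barr lifting of a relation along a functor, computed from the canonical span. -/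
def BarrLift (F : Type u ⥤ Type u) {X Y : Type u} (r : Rel' X Y) :
    Rel' (F.obj X) (F.obj Y) :=
  fun a b => ∃ t : F.obj {p : X × Y // r p.1 p.2},
    F.map (TypeCat.ofHom (fun p : {p : X × Y // r p.1 p.2} => p.1.1)) t = a ∧
    F.map (TypeCat.ofHom (fun p : {p : X × Y // r p.1 p.2} => p.1.2)) t = b

/-- A commutative square of functions that is a pullback. -/
def IsPBSquare {P X Y Z : Type u} (p₁ : P → X) (p₂ : P → Y) (f : X → Z) (g : Y → Z) : Prop :=
  (∀ p, f (p₁ p) = g (p₂ p)) ∧ ∀ x y, f x = g y → ∃! p, p₁ p = x ∧ p₂ p = y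

/-- A commutative square of functions that is a weak pullback. -/
def IsWeakPBSquare {P X Y Z : Type u} (p₁ : P → X) (p₂ : P → Y) (f : X → Z) (g : Y → Z) : Prop :=
  (∀ p, f (p₁ p) = g (p₂ p)) ∧ ∀ x y, f x = g y → ∃ p, p₁ p = x ∧ p₂ p = y

/-- `F` preserves 1/4-iso pullbacks. -/
def Preserves14IsoPullbacks (F : Type u ⥤ Type u) : Prop :=
  ∀ (P X Y Z : Type u) (p₁ : P → X) (p₂ : P → Y) (f : X → Z) (g : Y → Z),
    Function.Bijective p₂ → IsPBSquare p₁ p₂ f g →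
      IsPBSquare (F.map (TypeCat.ofHom p₁)) (F.map (TypeCat.ofHom p₂)) (F.map (TypeCat.ofHom f)) (F.map (TypeCat.ofHom g))

/-- `F` preserves 1/4-iso 2/4-mono pullbacks. -/
def Preserves14Iso24MonoPullbacks (F : Type u ⥤ Type u) : Prop :=
  ∀ (P X Y Z : Type u) (p₁ : P → X) (p₂ : P → Y) (f : X → Z) (g : Y → Z),
    Function.Bijective p₂ → Function.Injective p₁ → Function.Injective g →
      IsPBSquare p₁ p₂ f g →
      IsPBSquare (F.map (TypeCat.ofHom p₁)) (F.map (TypeCat.ofHom p₂)) (F.map (TypeCat.ofHom f)) (F.map (TypeCat.ofHom g))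

/-- `F` preserves 1/4-mono pullbacks. -/
def Preserves14MonoPullbacks (F : Type u ⥤ Type u) : Prop :=
  ∀ (P X Y Z : Type u) (p₁ : P → X) (p₂ : P → Y) (f : X → Z) (g : Y → Z),
    Function.Injective p₁ → IsPBSquare p₁ p₂ f g →
      IsPBSquare (F.map (TypeCat.ofHom p₁)) (F.map (TypeCat.ofHom p₂)) (F.map (TypeCat.ofHom f)) (F.map (TypeCat.ofHom g))

/-- `F` preserves inverse images. -/
def PreservesInverseImages (F : Type u ⥤ Type u) : Prop :=
  ∀ (P X Y Z : Type u) (p₁ : P → X) (p₂ : P → Y) (f : X → Z) (g : Y → Z),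
    Function.Injective p₁ → Function.Injective g → IsPBSquare p₁ p₂ f g →
      IsPBSquare (F.map (TypeCat.ofHom p₁)) (F.map (TypeCat.ofHom p₂)) (F.map (TypeCat.ofHom f)) (F.map (TypeCat.ofHom g))

/-- `F` weakly preserves 4/4-epi pullbacks. -/
def WeaklyPreserves44EpiPullbacks (F : Type u ⥤ Type u) : Prop :=
  ∀ (P X Y Z : Type u) (p₁ : P → X) (p₂ : P → Y) (f : X → Z) (g : Y → Z),
    Function.Surjective p₁ → Function.Surjective p₂ →
    Function.Surjective f → Function.Surjective g →
    IsPBSquare p₁ p₂ f g →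
      IsWeakPBSquare (F.map (TypeCat.ofHom p₁)) (F.map (TypeCat.ofHom p₂)) (F.map (TypeCat.ofHom f)) (F.map (TypeCat.ofHom g))

/-- A (nonempty) composable sequence of relations from `X` to `Z`. -/
inductive RelChain : Type u → Type u → Type (u + 1)
  | single : ∀ {X Y : Type u}, Rel' X Y → RelChain X Y
  | cons : ∀ {X Y Z : Type u}, Rel' X Y → RelChain Y Z → RelChain X Z

/-- Composite of a composable sequence of relations (first relation applied first). -/
def RelChain.comp : ∀ {X Z : Type u}, RelChain X Z → Rel' X Z
  | _, _, .single r => r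
  | _, _, .cons r c => relComp (RelChain.comp c) r

/-- Composite of the Barr liftings of a composable sequence of relations. -/
def RelChain.barr (F : Type u ⥤ Type u) : ∀ {X Z : Type u}, RelChain X Z → Rel' (F.obj X) (F.obj Z)
  | _, _, .single r => BarrLift F r
  | _, _, .cons r c => relComp (RelChain.barr F c) (BarrLift F r)

/-- Length (number of relations) of a composable sequence. -/
def RelChain.length : ∀ {X Z : Type u}, RelChain X Z → ℕ
  | _, _, .single _ => 1
  | _, _, .cons _ c => RelChain.length c + 1

/-- All relations in a composable sequence are total and surjective. -/
def RelChain.allTS : ∀ {X Z : Type u}, RelChain X Z → Prop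
  | _, _, .single r => relTotal r ∧ relSurj r
  | _, _, .cons r c => (relTotal r ∧ relSurj r) ∧ RelChain.allTS c

/-- All relations in a composable sequence except the last one are total and surjective. -/
def RelChain.initTS : ∀ {X Z : Type u}, RelChain X Z → Prop
  | _, _, .single _ => True
  | _, _, .cons r c => (relTotal r ∧ relSurj r) ∧ RelChain.initTS c

/-- Composite of the images of a composable sequence of relations under an assignment `R`. -/
def RelChain.lift (F : Type u ⥤ Type u)
    (R : ∀ {X Y : Type u}, Rel' X Y → Rel' (F.obj X) (F.obj Y)) :
    ∀ {X Z : Type u}, RelChain X Z → Rel' (F.obj X) (F.obj Z)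
  | _, _, .single r => R r
  | _, _, .cons r c => relComp (RelChain.lift F (fun {_ _} s => R s) c) (R r)

/-- `r ⋅ (r° ⋅ r)ⁿ`. -/
def dfPow {X Y : Type u} (r : Rel' X Y) : ℕ → Rel' X Y
  | 0 => r
  | n + 1 => relComp (dfPow r n) (relComp (relConv r) r)

/-- The difunctional closure `r̂ = ⋁ₙ r ⋅ (r° ⋅ r)ⁿ` of a relation. -/
def difunClosure {X Y : Type u} (r : Rel' X Y) : Rel' X Y :=
  fun x y => ∃ n : ℕ, dfPow r n x y

/-! Write the sequence as `r₁, …, rₙ` through `X = V₀, V₁, …, Vₙ = Y` with `n ≥ 2` (for `n = 1`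
take `r` itself and use monotonicity of the Barr lifting). Enlarge each intermediate `Vᵢ` to
`Vᵢ ⊕ X`: `r₁'` relates `x` to `r₁ x` and to its own copy in `X`, the middle relations are
`rᵢ ⊕ 1_X`, and `rₙ'` is `rₙ` on `Vₙ₋₁` and `r` on `X`. The composite is then
`(rₙ ⋅ … ⋅ r₁) ∪ r = r`, and the Barr liftings of the `rᵢ` are carried into those of the `rᵢ'`
by the coproduct injections `Vᵢ → Vᵢ ⊕ X`. -/

lemma map_ofHom_id_apply (F : Type u ⥤ Type u) {X : Type u} (x : F.obj X) :
    F.map (TypeCat.ofHom id) x = x :=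
  F.map_id_apply X x

lemma BarrLift.map (F : Type u ⥤ Type u) {X Y X' Y' : Type u} {r : Rel' X Y} {r' : Rel' X' Y'}
    (f : X → X') (g : Y → Y') (h : ∀ x y, r x y → r' (f x) (g y)) {a : F.obj X} {b : F.obj Y}
    (hab : BarrLift F r a b) :
    BarrLift F r' (F.map (TypeCat.ofHom f) a) (F.map (TypeCat.ofHom g) b) := by
  obtain ⟨t, rfl, rfl⟩ := hab
  let m : {p : X × Y // r p.1 p.2} → {p : X' × Y' // r' p.1 p.2} :=
    fun p => ⟨(f p.1.1, g p.1.2), h _ _ p.2⟩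
  refine ⟨F.map (TypeCat.ofHom m) t, ?_, ?_⟩ <;>
    simp only [← Functor.map_comp_apply] <;> rfl

lemma BarrLift.mono (F : Type u ⥤ Type u) {X Y : Type u} {r r' : Rel' X Y} (h : relLe r r') :
    relLe (BarrLift F r) (BarrLift F r') := by
  intro a b hab
  simpa only [map_ofHom_id_apply] using BarrLift.map F id id h hab

lemma relComp_sumElim {X V W Z : Type u} (p : Rel' X V) (q : Rel' X W) (s : Rel' V Z)
    (t : Rel' W Z) (x : X) (z : Z) :
    relComp (Sum.elim s t) (fun x => Sum.elim (p x) (q x)) x z ↔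
      relComp s p x z ∨ relComp t q x z := by
  simp only [relComp, Sum.exists, Sum.elim_inl, Sum.elim_inr]

namespace RelChain

variable {X Z : Type u} (r : Rel' X Z)

def sumLeft : ∀ {W : Type u}, RelChain W Z → RelChain (W ⊕ X) Z
  | _, .single s => .single (Sum.elim s r)
  | _, .cons s c => .cons (Sum.LiftRel s Eq) (sumLeft c)

lemma length_sumLeft {W : Type u} (c : RelChain W Z) : (c.sumLeft r).length = c.length := by
  induction c with
  | single => rfl
  | cons _ _ ih => simp only [sumLeft, length, ih]

lemma comp_sumLeft {W : Type u} (c : RelChain W Z) : (c.sumLeft r).comp = Sum.elim c.comp r := by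
  induction c with
  | single => rfl
  | cons s c ih =>
    funext m z
    rcases m with w | x <;> simp [sumLeft, comp, ih, relComp]

lemma barr_sumLeft (F : Type u ⥤ Type u) {W : Type u} (c : RelChain W Z)
    {a : F.obj W} {b : F.obj Z} (h : c.barr F a b) :
    (c.sumLeft r).barr F (F.map (TypeCat.ofHom Sum.inl) a) b := by
  induction c with
  | single s =>
    simpa only [map_ofHom_id_apply, sumLeft, barr] using
      BarrLift.map F Sum.inl id (r' := Sum.elim s r) (fun _ _ h => h) h
  | cons s c ih =>
    obtain ⟨m, ham, hmb⟩ := h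
    exact ⟨_, BarrLift.map F Sum.inl Sum.inl (fun _ _ h => Sum.LiftRel.inl h) ham, ih r hmb⟩

end RelChain

/-- Any composable sequence with composite `≤ r` admits a same-length composable sequence
with composite exactly `r` whose Barr-lifting composite is above the original one. -/
theorem stmt10 (F : Type u ⥤ Type u) (X Y : Type u) (r : Rel' X Y) (c : RelChain X Y)
    (h : relLe (RelChain.comp c) r) :
    ∃ c' : RelChain X Y, RelChain.length c' = RelChain.length c ∧
      RelChain.comp c' = r ∧ relLe (RelChain.barr F c) (RelChain.barr F c') := by
  cases c with
  | single s => exact ⟨.single r, rfl, rfl, BarrLift.mono F h⟩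
  | cons s c =>
    refine ⟨.cons (fun x => Sum.elim (s x) (x = ·)) (c.sumLeft r), by
      simp only [RelChain.length, RelChain.length_sumLeft], ?_, ?_⟩
    · funext x y
      rw [RelChain.comp, RelChain.comp_sumLeft, relComp_sumElim, eq_iff_iff]
      exact ⟨fun hxy => hxy.elim (h x y) fun ⟨_, rfl, hr⟩ => hr, fun hr => .inr ⟨x, rfl, hr⟩⟩
    · rintro a b ⟨m, ham, hmb⟩
      refine ⟨_, ?_, c.barr_sumLeft r F hmb⟩
      simpa only [map_ofHom_id_apply] using
        BarrLift.map F id Sum.inl (r' := fun x => Sum.elim (s x) (x = ·)) (fun _ _ h => h) ham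
end

section
/- Let F be a Set-functor that preserves 1/4-iso pullbacks. Then F admits a normal lax extension if and only if for every composable sequence of relations r₁, …, rₙ with n ≥ 4 such that r₂, …, rₙ₋₁ are total and surjective, whenever rₙ ⋅ … ⋅ r₁ = 1_X for some set X, then F̄rₙ ⋅ … ⋅ F̄r₁ ≤ 1_{F X}, where F̄ denotes the Barr lifting of F. -/
/-!
Every lax extension `L` contains the Barr lifting, so if `L` is normal the Barr composite of a
chain with composite `1_X` lies in `L 1_X = 1_{F X}`. Conversely, let `L r` be the union of the
Barr composites of all chains whose composite lies below `r`; concatenating chains gives (L2), and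
`L` is normal as soon as every chain with composite below `1_X` has Barr composite below
`1_{F X}`. An arbitrary such chain embeds into one of the restricted shape: adjoin to every
intermediate set a copy of `X`, which makes the composite exactly `1_X`, together with a source
and a sink, which make the middle relations total and surjective. Barr liftings are natural along
the inclusions, so the Barr composite of the original chain is contained in that of the padded one.
-/

open CategoryTheory

universe u

section BarrLift

variable (F : Type u ⥤ Type u)

theorem map_ofHom_map_ofHom {A B C : Type u} (f : A → B) (g : B → C) (a : F.obj A) :
    F.map (TypeCat.ofHom g) (F.map (TypeCat.ofHom f) a) = F.map (TypeCat.ofHom (g ∘ f)) a :=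
  (F.map_comp_apply (TypeCat.ofHom f) (TypeCat.ofHom g) a).symm

theorem map_ofHom_id {A : Type u} (a : F.obj A) : F.map (TypeCat.ofHom (id : A → A)) a = a :=
  F.map_id_apply A a

theorem barrLift_map {A B A' B' : Type u} (f : A → A') (g : B → B') {r : Rel' A B}
    {r' : Rel' A' B'} (hr : ∀ a b, r a b → r' (f a) (g b)) {a : F.obj A} {b : F.obj B}
    (h : BarrLift F r a b) :
    BarrLift F r' (F.map (TypeCat.ofHom f) a) (F.map (TypeCat.ofHom g) b) := by
  obtain ⟨t, rfl, rfl⟩ := h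
  refine ⟨F.map (TypeCat.ofHom fun p => ⟨(f p.1.1, g p.1.2), hr _ _ p.2⟩) t, ?_, ?_⟩ <;>
    simp only [map_ofHom_map_ofHom]

theorem barrLift_relId_refl {X : Type u} (a : F.obj X) : BarrLift F (relId X) a a :=
  ⟨F.map (TypeCat.ofHom fun x => ⟨(x, x), rfl⟩) a,
    (map_ofHom_map_ofHom F _ _ a).trans (map_ofHom_id F a),
    (map_ofHom_map_ofHom F _ _ a).trans (map_ofHom_id F a)⟩

theorem barrLift_graphRel {X Y : Type u} (f : X → Y) (a : F.obj X) :
    BarrLift F (graphRel f) a (F.map (TypeCat.ofHom f) a) := by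
  simpa only [map_ofHom_id] using
    barrLift_map F id f (r' := graphRel f) (fun x y h => congrArg f h) (barrLift_relId_refl F a)

theorem barrLift_relConv_graphRel {X Y : Type u} (f : X → Y) (a : F.obj X) :
    BarrLift F (relConv (graphRel f)) (F.map (TypeCat.ofHom f) a) a := by
  simpa only [map_ofHom_id] using
    barrLift_map F f id (r' := relConv (graphRel f)) (fun x y h => congrArg f h.symm)
      (barrLift_relId_refl F a)

theorem barrLift_le_ext (L : LaxExt F) {X Y : Type u} (r : Rel' X Y) :
    relLe (BarrLift F r) (L.ext r) := by
  rintro a b ⟨t, rfl, rfl⟩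
  let π₁ : {p : X × Y // r p.1 p.2} → X := fun p => p.1.1
  let π₂ : {p : X × Y // r p.1 p.2} → Y := fun p => p.1.2
  have hspan : relLe (relComp (graphRel π₂) (relConv (graphRel π₁))) r := by
    rintro x y ⟨p, rfl, rfl⟩
    exact p.2
  exact L.mono _ r hspan _ _ <| L.lcomp _ _ _ _
    ⟨t, L.mapConvLe π₁ _ t rfl, L.mapLe π₂ t _ rfl⟩

end BarrLift

namespace RelChain

variable (F : Type u ⥤ Type u)

theorem barr_le_ext (L : LaxExt F) {X Y : Type u} (c : RelChain X Y) :
    relLe (c.barr F) (L.ext c.comp) := by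
  induction c with
  | single r => exact barrLift_le_ext F L r
  | cons r c ih =>
    rintro a b ⟨m, hr, hc⟩
    exact L.lcomp r c.comp a b ⟨m, barrLift_le_ext F L r a m hr, ih m b hc⟩

def append : ∀ {X Y Z : Type u}, RelChain X Y → RelChain Y Z → RelChain X Z
  | _, _, _, .single r, c => .cons r c
  | _, _, _, .cons r c₁, c₂ => .cons r (append c₁ c₂)

theorem comp_append_le {X Y Z : Type u} (c₁ : RelChain X Y) (c₂ : RelChain Y Z) :
    relLe (c₁.append c₂).comp (relComp c₂.comp c₁.comp) := by
  induction c₁ with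
  | single r => exact fun _ _ => id
  | cons r c ih =>
    rintro x z ⟨w, hr, hc⟩
    obtain ⟨y, hc₁, hc₂⟩ := ih c₂ w z hc
    exact ⟨y, ⟨w, hr, hc₁⟩, hc₂⟩

theorem barr_le_barr_append {X Y Z : Type u} (c₁ : RelChain X Y) (c₂ : RelChain Y Z) :
    relLe (relComp (c₂.barr F) (c₁.barr F)) ((c₁.append c₂).barr F) := by
  induction c₁ with
  | single r => exact fun _ _ => id
  | cons r c ih =>
    rintro a b ⟨m, ⟨w, hr, hc₁⟩, hc₂⟩
    exact ⟨w, hr, ih c₂ w b ⟨m, hc₁, hc₂⟩⟩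

end RelChain

def SubidentityCondition (F : Type u ⥤ Type u) : Prop :=
  ∀ {X : Type u} (c : RelChain X X), relLe c.comp (relId X) → relLe (c.barr F) (relId (F.obj X))

theorem LaxExt.subidentityCondition {F : Type u ⥤ Type u} (L : LaxExt F) (hL : L.IsNormal) :
    SubidentityCondition F := by
  intro X c hc a b hab
  have h := L.mono _ _ hc a b (c.barr_le_ext F L a b hab)
  rwa [hL X] at h

def chainExt (F : Type u ⥤ Type u) {X Y : Type u} (r : Rel' X Y) : Rel' (F.obj X) (F.obj Y) :=
  fun a b => ∃ c : RelChain X Y, relLe c.comp r ∧ c.barr F a b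

def chainLaxExt (F : Type u ⥤ Type u) : LaxExt F where
  ext := chainExt F
  mono r r' hr := by
    rintro a b ⟨c, hc, hab⟩
    exact ⟨c, fun x y h => hr x y (hc x y h), hab⟩
  lcomp r s := by
    rintro a b ⟨m, ⟨c₁, hc₁, ham⟩, ⟨c₂, hc₂, hmb⟩⟩
    refine ⟨c₁.append c₂, fun x z h => ?_, RelChain.barr_le_barr_append F c₁ c₂ a b ⟨m, ham, hmb⟩⟩
    obtain ⟨y, hxy, hyz⟩ := RelChain.comp_append_le c₁ c₂ x z h
    exact ⟨y, hc₁ x y hxy, hc₂ y z hyz⟩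
  mapLe f := by
    rintro a _ rfl
    exact ⟨.single (graphRel f), fun _ _ => id, barrLift_graphRel F f a⟩
  mapConvLe f := by
    rintro _ a rfl
    exact ⟨.single (relConv (graphRel f)), fun _ _ => id, barrLift_relConv_graphRel F f a⟩

theorem chainLaxExt_isNormal {F : Type u ⥤ Type u} (hF : SubidentityCondition F) :
    (chainLaxExt F).IsNormal := by
  intro X
  funext a b
  apply propext
  constructor
  · rintro ⟨c, hc, hab⟩
    exact hF c hc a b hab
  · rintro rfl
    exact ⟨.single (relId X), fun _ _ => id, barrLift_relId_refl F a⟩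

inductive Pad : Type u
  | source | sink

section Padding

variable {X : Type u}

/- In `Y ⊕ X ⊕ Pad` the copy of `X` carries the identity of `X` through the chain. The source
relates to everything and the sink is related to from everything, which makes `padRel s` total
and surjective; as nothing reaches the source and the sink reaches nothing, no new path from `X`
to `X` arises. -/
def padRel {Y Z : Type u} : Rel' Y Z → Rel' (Y ⊕ X ⊕ Pad.{u}) (Z ⊕ X ⊕ Pad.{u})
  | s, .inl y, .inl z => s y z
  | _, .inl _, .inr (.inr .sink) => True
  | _, .inr (.inl x), .inr (.inl x') => x = x'
  | _, .inr (.inr .sink), .inr (.inr .sink) => True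
  | _, .inr (.inr .source), .inl _ => True
  | _, .inr (.inr .source), .inr (.inr .source) => True
  | _, _, _ => False

def padLast {Y : Type u} : Rel' Y X → Rel' (Y ⊕ X ⊕ Pad.{u}) X
  | s, .inl y, x => s y x
  | _, .inr (.inl x'), x => x' = x
  | _, .inr (.inr _), _ => False

def padHead (X : Type u) : Rel' X (X ⊕ X ⊕ Pad.{u}) :=
  fun x m => m = .inl x ∨ m = .inr (.inl x)

theorem padRel_total {Y Z : Type u} (s : Rel' Y Z) : relTotal (padRel (X := X) s) := by
  rintro (y | x | _ | _)
  · exact ⟨.inr (.inr .sink), trivial⟩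
  · exact ⟨.inr (.inl x), rfl⟩
  · exact ⟨.inr (.inr .source), trivial⟩
  · exact ⟨.inr (.inr .sink), trivial⟩

theorem padRel_surj {Y Z : Type u} (s : Rel' Y Z) : relSurj (padRel (X := X) s) := by
  rintro (z | x | _ | _)
  · exact ⟨.inr (.inr .source), trivial⟩
  · exact ⟨.inr (.inl x), rfl⟩
  · exact ⟨.inr (.inr .source), trivial⟩
  · exact ⟨.inr (.inr .sink), trivial⟩

end Padding

namespace RelChain

variable (F : Type u ⥤ Type u)

theorem one_le_length {X Y : Type u} (c : RelChain X Y) : 1 ≤ c.length := by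
  cases c <;> simp [length]

def pad {X : Type u} : ∀ {Y : Type u}, RelChain Y X → RelChain (Y ⊕ X ⊕ Pad.{u}) X
  | _, .single s => .single (padLast s)
  | _, .cons s c => .cons (padRel s) c.pad

variable {X Y : Type u}

theorem length_pad (c : RelChain Y X) : c.pad.length = c.length := by
  induction c with
  | single s => rfl
  | cons s c ih => simp only [pad, length, ih]

theorem initTS_pad (c : RelChain Y X) : c.pad.initTS := by
  induction c with
  | single s => trivial
  | cons s c ih => exact ⟨⟨padRel_total s, padRel_surj s⟩, ih⟩

theorem comp_pad_copy (c : RelChain Y X) (x : X) : c.pad.comp (.inr (.inl x)) x := by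
  induction c with
  | single s => rfl
  | cons s c ih => exact ⟨.inr (.inl x), rfl, ih x⟩

theorem comp_pad_cases (c : RelChain Y X) {w : Y ⊕ X ⊕ Pad.{u}} {x : X}
    (h : c.pad.comp w x) :
    (∃ y, w = .inl y ∧ c.comp y x) ∨ w = .inr (.inl x) ∨ w = .inr (.inr .source) := by
  induction c with
  | single s =>
    rcases w with y | x' | _ | _
    · exact .inl ⟨y, rfl, h⟩
    · exact .inr (.inl (congrArg _ (congrArg _ h)))
    · exact h.elim
    · exact h.elim
  | cons s c ih =>
    obtain ⟨m, hwm, hm⟩ := h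
    rcases ih hm with ⟨z, rfl, hz⟩ | rfl | rfl <;> rcases w with y | x' | _ | _ <;>
      first
      | exact .inl ⟨y, rfl, z, hwm, hz⟩
      | exact .inr (.inl (congrArg _ (congrArg _ hwm)))
      | exact .inr (.inr rfl)
      | exact hwm.elim

theorem barr_le_barr_pad (c : RelChain Y X) {a : F.obj Y} {b : F.obj X} (h : c.barr F a b) :
    c.pad.barr F (F.map (TypeCat.ofHom Sum.inl) a) b := by
  induction c with
  | single s =>
    show BarrLift F (padLast s) _ b
    simpa only [map_ofHom_id] using
      barrLift_map F Sum.inl id (r' := padLast s) (fun _ _ => id) h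
  | cons s c ih =>
    obtain ⟨m, hs, hc⟩ := h
    exact ⟨_, barrLift_map F Sum.inl Sum.inl (r' := padRel s) (fun _ _ => id) hs, ih hc⟩

theorem comp_cons_padHead_pad (c : RelChain X X) (hc : relLe c.comp (relId X)) :
    (cons (padHead X) c.pad).comp = relId X := by
  funext x x'
  apply propext
  constructor
  · rintro ⟨w, hxw, hw⟩
    rcases comp_pad_cases c hw with ⟨y, rfl, hy⟩ | rfl | rfl
    · rcases hxw with h | h <;> cases h
      exact hc x x' hy
    · rcases hxw with h | h <;> cases h
      rfl
    · rcases hxw with h | h <;> cases h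
  · rintro rfl
    exact ⟨.inr (.inl x), .inr rfl, comp_pad_copy c x⟩

theorem barr_le_barr_cons_padHead_pad (c : RelChain X X) {a b : F.obj X} (h : c.barr F a b) :
    (cons (padHead X) c.pad).barr F a b := by
  refine ⟨_, ?_, barr_le_barr_pad F c h⟩
  simpa only [map_ofHom_id] using
    barrLift_map F id Sum.inl (r' := padHead X) (fun x _ h => .inl (congrArg _ h.symm))
      (barrLift_relId_refl F a)

end RelChain

theorem subidentityCondition_of_initTS {F : Type u ⥤ Type u}
    (H : ∀ (X Y : Type u) (r₁ : Rel' X Y) (c : RelChain Y X),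
      3 ≤ RelChain.length c → RelChain.initTS c →
      RelChain.comp (RelChain.cons r₁ c) = relId X →
      relLe (RelChain.barr F (RelChain.cons r₁ c)) (relId (F.obj X))) :
    SubidentityCondition F := by
  intro X c₀ hc₀ a b hab
  let c : RelChain X X := .cons (relId X) (.cons (relId X) c₀)
  have hlen : 3 ≤ c.pad.length := by
    simp only [c, RelChain.length_pad, RelChain.length]
    linarith [c₀.one_le_length]
  have hc : relLe c.comp (relId X) := by
    rintro x y ⟨_, rfl, _, rfl, h⟩
    exact hc₀ _ _ h
  have hcab : c.barr F a b := ⟨a, barrLift_relId_refl F a, a, barrLift_relId_refl F a, hab⟩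
  exact H X _ (padHead X) c.pad hlen c.initTS_pad (c.comp_cons_padHead_pad hc) a b
    (c.barr_le_barr_cons_padHead_pad F hcab)

theorem stmt14_general (F : Type u ⥤ Type u) :
    (∃ L : LaxExt F, L.IsNormal) ↔
      ∀ (X Y : Type u) (r₁ : Rel' X Y) (c : RelChain Y X),
        3 ≤ RelChain.length c → RelChain.initTS c →
        RelChain.comp (RelChain.cons r₁ c) = relId X →
        relLe (RelChain.barr F (RelChain.cons r₁ c)) (relId (F.obj X)) := by
  constructor
  · rintro ⟨L, hL⟩ X Y r₁ c - - hc
    exact L.subidentityCondition hL _ (hc ▸ fun _ _ => id)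
  · intro H
    exact ⟨chainLaxExt F, chainLaxExt_isNormal (subidentityCondition_of_initTS H)⟩

/-- A functor preserving 1/4-iso pullbacks admits a normal lax extension iff the
subidentity condition holds for all composable sequences of length at least `4` in which
all relations other than the first and the last are total and surjective. -/
theorem stmt14 (F : Type u ⥤ Type u) (h : Preserves14IsoPullbacks F) :
    (∃ L : LaxExt F, L.IsNormal) ↔
      ∀ (X Y : Type u) (r₁ : Rel' X Y) (c : RelChain Y X),
        3 ≤ RelChain.length c → RelChain.initTS c →
        RelChain.comp (RelChain.cons r₁ c) = relId X →
        relLe (RelChain.barr F (RelChain.cons r₁ c)) (relId (F.obj X)) :=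
  stmt14_general F
end
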